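/- arXiv:0809.2774 — 4 statements merged into one kernel-verified Lean document; each statement's English description precedes it below -/
import Mathlib

section
/- Let K be a field of characteristic 0 or characteristic greater than the truncation order, and let S be a formal power series over K with S(0) = α, S'(0) = β ≠ 0, satisfying S'(x)² = G(x) · H(S(x)) where G is a power series with G(0) = β² and H a polynomial with H(α) = 1. Then the coefficient of x² in S equals (G'(0) + H'(α)·β³)/(4β). -/
open PowerSeries

namespace PowerSeries

variable {R : Type*} [CommRing R]

theorem constantCoeff_aeval (S : R⟦X⟧) (p : Polynomial R) :
    constantCoeff (Polynomial.aeval S p) = p.eval (constantCoeff S) := by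
  have hid : constantCoeff.comp (algebraMap R R⟦X⟧) = RingHom.id R := RingHom.ext fun r => by simp
  rw [Polynomial.aeval_def, Polynomial.hom_eval₂, hid, Polynomial.eval]

theorem coeff_one_eq_constantCoeff_derivative (S : R⟦X⟧) :
    coeff 1 S = constantCoeff (d⁄dX R S) := by
  simp [← coeff_zero_eq_constantCoeff, coeff_derivative]

/-- The chain rule `(p ∘ S)' = (p' ∘ S) · S'`, read off at `0`. -/
theorem coeff_one_aeval (S : R⟦X⟧) (p : Polynomial R) :
    coeff 1 (Polynomial.aeval S p) =
      (Polynomial.derivative p).eval (constantCoeff S) * coeff 1 S := by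
  rw [coeff_one_eq_constantCoeff_derivative, Derivation.map_aeval, smul_eq_mul, map_mul,
    constantCoeff_aeval, ← coeff_one_eq_constantCoeff_derivative]

end PowerSeries

/-- If `S ∈ K[[x]]` satisfies `S'² = G · (H ∘ S)` with `S(0) = α`, `S'(0) = β ≠ 0`,
`G(0) = β²` and `H(α) = 1` (with `4` invertible in `K`), then the coefficient of `x²`
in `S` equals `(G'(0) + H'(α)·β³) / (4β)`. -/
theorem coeff_two_of_ode {K : Type*} [Field K] (G S : PowerSeries K) (H : Polynomial K)
    (α β : K) (hβ : β ≠ 0) (h4 : (4 : K) ≠ 0)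
    (hH : H.eval α = 1) (hG : constantCoeff G = β ^ 2)
    (hS0 : constantCoeff S = α) (hS1 : coeff 1 S = β)
    (hode : (derivative K S) ^ 2 = G * Polynomial.aeval S H) :
    coeff 2 S = (coeff 1 G + Polynomial.eval α (Polynomial.derivative H) * β ^ 3) / (4 * β) := by
  have hS'0 : constantCoeff (d⁄dX K S) = β := by
    rw [← coeff_one_eq_constantCoeff_derivative, hS1]
  have hS'1 : coeff 1 (d⁄dX K S) = 2 * coeff 2 S := by
    rw [coeff_derivative]; norm_num [mul_comm]
  have hHS0 : constantCoeff (Polynomial.aeval S H) = 1 := by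
    rw [constantCoeff_aeval, hS0, hH]
  -- compare the coefficients of `x` in the differential equation
  have hx := congrArg (coeff 1) hode
  rw [sq, coeff_one_mul, coeff_one_mul, coeff_one_aeval, hS'0, hS'1, hHS0, hS0, hS1, hG] at hx
  field_simp
  linear_combination hx
end

section
/- Newton iteration for square roots of power series: let K be a field of characteristic ≠ 2, A ∈ K[[x]] with A(0) = 1, and suppose V ∈ K[[x]] satisfies V² ≡ A (mod x^d) and V(0) = 1, and J satisfies V · J ≡ 1 (mod x^d). Then W := (V + J·A·(2 - V·J))/2 satisfies W² ≡ A (mod x^(2d)). -/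
open PowerSeries

/-! With `u = V J - 1` one has `V (V + J A (2 - V J)) = V² + A - A u²`, so

  `V² ((V + J A (2 - V J))² - 4 A) = (V² - A - A u²)² - (2 A u)²`.

Both `V² - A` and `u` are divisible by `p = x^d`, hence so are both bases on the right, and the
difference of their squares is divisible by `p²`. Dividing by the unit `4 V²` gives the claim. -/

section NewtonSqrt

variable {R : Type*} [CommRing R]

theorem newton_sqrt_identity (A V J : R) :
    V ^ 2 * ((V + J * A * (2 - V * J)) ^ 2 - 4 * A) =
      (V ^ 2 - A - A * (V * J - 1) ^ 2) ^ 2 - (2 * A * (V * J - 1)) ^ 2 := by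
  ring

theorem sq_dvd_sq_mul_newton_sqrt_sub {p A V J : R} (hVA : p ∣ V ^ 2 - A) (hVJ : p ∣ V * J - 1) :
    p ^ 2 ∣ V ^ 2 * ((V + J * A * (2 - V * J)) ^ 2 - 4 * A) := by
  have hu : p ∣ A * (V * J - 1) ^ 2 := (hVJ.pow two_ne_zero).mul_left A
  rw [newton_sqrt_identity]
  exact dvd_sub (pow_dvd_pow_of_dvd (dvd_sub hVA hu) 2)
    (pow_dvd_pow_of_dvd (hVJ.mul_left (2 * A)) 2)

theorem sq_dvd_newton_sqrt_sq_sub {p A V J c : R} (hc : c * 2 = 1) (hV : IsUnit V)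
    (hVA : p ∣ V ^ 2 - A) (hVJ : p ∣ V * J - 1) :
    p ^ 2 ∣ (c * (V + J * A * (2 - V * J))) ^ 2 - A := by
  have hsq : (c * (V + J * A * (2 - V * J))) ^ 2 - A =
      c ^ 2 * ((V + J * A * (2 - V * J)) ^ 2 - 4 * A) := by
    linear_combination ((c * 2 + 1) * A) * hc
  rw [hsq]
  exact dvd_mul_of_dvd_right
    ((hV.pow 2).dvd_mul_left.mp (sq_dvd_sq_mul_newton_sqrt_sub hVA hVJ)) _

end NewtonSqrt

theorem newton_sqrt_general {K : Type*} [Field K] (hchar : ringChar K ≠ 2)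
    (A V J : PowerSeries K) (d : ℕ)
    (hV : constantCoeff V = 1)
    (hVA : (X : PowerSeries K) ^ d ∣ V ^ 2 - A)
    (hVJ : (X : PowerSeries K) ^ d ∣ V * J - 1) :
    (X : PowerSeries K) ^ (2 * d) ∣
      (C (2 : K)⁻¹ * (V + J * A * (2 - V * J))) ^ 2 - A := by
  have hc : C (2 : K)⁻¹ * 2 = 1 := by
    rw [← map_ofNat C 2, ← map_mul, inv_mul_cancel₀ (Ring.two_ne_zero hchar), map_one]
  have hVunit : IsUnit V := by simp [isUnit_iff_constantCoeff, hV]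
  rw [mul_comm, pow_mul]
  exact sq_dvd_newton_sqrt_sq_sub hc hVunit hVA hVJ

/-- Newton iteration for square roots of power series: over a field `K` of characteristic `≠ 2`,
if `A(0) = 1 = V(0)`, `V² ≡ A (mod x^d)` and `V · J ≡ 1 (mod x^d)`, then
`W = (V + J·A·(2 - V·J))/2` satisfies `W² ≡ A (mod x^(2d))`. -/
theorem newton_sqrt {K : Type*} [Field K] (hchar : ringChar K ≠ 2)
    (A V J : PowerSeries K) (d : ℕ) (hd : 1 ≤ d)
    (hA : constantCoeff A = 1) (hV : constantCoeff V = 1)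
    (hVA : (X : PowerSeries K) ^ d ∣ V ^ 2 - A)
    (hVJ : (X : PowerSeries K) ^ d ∣ V * J - 1) :
    (X : PowerSeries K) ^ (2 * d) ∣
      (C (2 : K)⁻¹ * (V + J * A * (2 - V * J))) ^ 2 - A :=
  newton_sqrt_general hchar A V J d hV hVA hVJ
end

section
/- Let S_d be a power series solution modulo x^d of S'² = G·(H∘S) with S(0)=α, S'(0)=β, where β ≠ 0 and H(α) = 1. If S_{2d} = S_d + A is a solution modulo x^(2d) with x^(d+1) dividing A, then A satisfies the linear differential equation 2·S_d'·A' - G·(H'∘S_d)·A ≡ G·(H∘S_d) - (S_d')² (mod x^(2d)). -/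
/-!
Expanding `H` to first order at `S_d` gives `H(S_d + A) = H(S_d) + H'(S_d)·A + c·A²`, so the
defect `(S_d + A)'² - G·H(S_d + A)` of `S_d + A` differs from the claimed linear expression only by
`A'² - G·c·A²`. Since `x^(d+1) ∣ A`, both `A²` and `A'²` are divisible by `x^(2d)`.
-/

open PowerSeries

theorem Polynomial.exists_aeval_add_eq {R S : Type*} [CommSemiring R] [CommSemiring S]
    [Algebra R S] (p : Polynomial R) (x y : S) :
    ∃ c : S, p.aeval (x + y) = p.aeval x + p.derivative.aeval x * y + c * y ^ 2 := by
  obtain ⟨c, hc⟩ := (p.map (algebraMap R S)).exists_mul_sq_add_linear_part_eq_eval_add x y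
  refine ⟨c, ?_⟩
  simp only [← Polynomial.eval_map_algebraMap, ← hc, Polynomial.derivative_map]
  ring

theorem PowerSeries.X_pow_dvd_derivative {R : Type*} [CommSemiring R] {n : ℕ} {f : R⟦X⟧}
    (h : X ^ (n + 1) ∣ f) : X ^ n ∣ derivative R f := by
  rw [X_pow_dvd_iff] at h ⊢
  intro i hi
  rw [coeff_derivative, h (i + 1) (by omega), zero_mul]

theorem linearized_ode_general {K : Type*} [Field K]
    (G Sd A : PowerSeries K) (H : Polynomial K) (d : ℕ)
    (hA : (X : PowerSeries K) ^ (d + 1) ∣ A)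
    (hS2d : (X : PowerSeries K) ^ (2 * d) ∣
      (derivative K (Sd + A)) ^ 2 - G * Polynomial.aeval (Sd + A) H) :
    (X : PowerSeries K) ^ (2 * d) ∣
      2 * derivative K Sd * derivative K A
        - G * Polynomial.aeval Sd (Polynomial.derivative H) * A
        - (G * Polynomial.aeval Sd H - (derivative K Sd) ^ 2) := by
  obtain ⟨c, hc⟩ := H.exists_aeval_add_eq Sd A
  have hA' : (X : PowerSeries K) ^ (2 * d) ∣ derivative K A ^ 2 := by
    rw [mul_comm, pow_mul]
    exact pow_dvd_pow_of_dvd (X_pow_dvd_derivative hA) 2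
  have hA2 : (X : PowerSeries K) ^ (2 * d) ∣ A ^ 2 := by
    refine (pow_dvd_pow X (by omega : 2 * d ≤ (d + 1) * 2)).trans ?_
    rw [pow_mul]
    exact pow_dvd_pow_of_dvd hA 2
  have defect_eq : 2 * derivative K Sd * derivative K A
        - G * Polynomial.aeval Sd (Polynomial.derivative H) * A
        - (G * Polynomial.aeval Sd H - (derivative K Sd) ^ 2)
      = ((derivative K (Sd + A)) ^ 2 - G * Polynomial.aeval (Sd + A) H)
        - derivative K A ^ 2 + G * c * A ^ 2 := by
    rw [map_add, hc]
    ring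
  rw [defect_eq]
  exact (hS2d.sub hA').add (hA2.mul_left _)

/-- If `S_d` solves `S'² = G·(H∘S)` modulo `x^d` with `S(0) = α`, `S'(0) = β ≠ 0`,
`H(α) = 1`, `G(0) = β²`, and `S_d + A` solves it modulo `x^(2d)` with `x^(d+1) ∣ A`, then
`A` satisfies the linear differential equation
`2·S_d'·A' - G·(H'∘S_d)·A ≡ G·(H∘S_d) - (S_d')² (mod x^(2d))`. -/
theorem linearized_ode {K : Type*} [Field K] [CharZero K]
    (G Sd A : PowerSeries K) (H : Polynomial K) (α β : K) (d : ℕ) (hd : 0 < d)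
    (hβ : β ≠ 0) (hH : H.eval α = 1) (hG : constantCoeff G = β ^ 2)
    (hS0 : constantCoeff Sd = α) (hS1 : coeff 1 Sd = β)
    (hSd : (X : PowerSeries K) ^ d ∣ (derivative K Sd) ^ 2 - G * Polynomial.aeval Sd H)
    (hA : (X : PowerSeries K) ^ (d + 1) ∣ A)
    (hS2d : (X : PowerSeries K) ^ (2 * d) ∣
      (derivative K (Sd + A)) ^ 2 - G * Polynomial.aeval (Sd + A) H) :
    (X : PowerSeries K) ^ (2 * d) ∣
      2 * derivative K Sd * derivative K A
        - G * Polynomial.aeval Sd (Polynomial.derivative H) * A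
        - (G * Polynomial.aeval Sd H - (derivative K Sd) ^ 2) :=
  linearized_ode_general G Sd A H d hA hS2d
end

section
/- The differential equation S'² = G·(H∘S) with initial conditions S(0) = α, S'(0) = β (β² = G(0) ≠ 0, H(α) = 1) has a unique power series solution modulo x^μ over a field of characteristic 0 or characteristic p with μ ≤ p: any two solutions S₁, S₂ with the same initial conditions satisfy S₁ ≡ S₂ (mod x^μ). -/
open PowerSeries

/-!
Put `D = S₁ - S₂`. Subtracting the two equations gives the linear equation
`(S₁' + S₂') · D' ≡ G · (H(S₁) - H(S₂)) (mod x^(μ-1))`, whose right-hand side is divisible by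
`D`. If `x^n ∣ D` with `2 ≤ n < μ`, the coefficient of `x^(n-1)` on the left is
`2β · n · [x^n] D`, and `2β · n ≠ 0` because `n < μ` is below the characteristic; hence
`x^(n+1) ∣ D`. The initial conditions give `x^2 ∣ D`.
-/

theorem natCast_ne_zero_of_lt {R : Type*} [NonAssocSemiring R] {μ m : ℕ}
    (hchar : ringChar R = 0 ∨ μ ≤ ringChar R) (hm : 0 < m) (hmμ : m < μ) : (m : R) ≠ 0 := by
  rw [Ne, ringChar.spec]
  intro hdvd
  rcases hchar with h0 | hμ
  · rw [h0, zero_dvd_iff] at hdvd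
    omega
  · have := Nat.le_of_dvd hm hdvd
    omega

theorem Polynomial.sub_dvd_aeval_sub {R A : Type*} [CommRing R] [CommRing A] [Algebra R A]
    (a b : A) (p : Polynomial R) : a - b ∣ Polynomial.aeval a p - Polynomial.aeval b p := by
  simpa only [Polynomial.aeval_def, Polynomial.eval_map] using
    Polynomial.sub_dvd_eval_sub a b (p.map (algebraMap R A))

namespace PowerSeries

variable {R : Type*} [CommRing R]

theorem X_pow_two_dvd_iff {f : R⟦X⟧} :
    (X : R⟦X⟧) ^ 2 ∣ f ↔ constantCoeff f = 0 ∧ coeff 1 f = 0 := by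
  rw [X_pow_dvd_iff, ← coeff_zero_eq_constantCoeff_apply]
  refine ⟨fun h => ⟨h 0 (by norm_num), h 1 (by norm_num)⟩, fun h m hm => ?_⟩
  interval_cases m
  exacts [h.1, h.2]

theorem X_pow_dvd_derivative_s17 {n : ℕ} {f : R⟦X⟧} (hf : (X : R⟦X⟧) ^ (n + 1) ∣ f) :
    (X : R⟦X⟧) ^ n ∣ d⁄dX R f := by
  rw [X_pow_dvd_iff] at hf ⊢
  intro m hm
  rw [coeff_derivative, hf (m + 1) (by omega), zero_mul]

theorem coeff_mul_of_X_pow_dvd (f : R⟦X⟧) {n : ℕ} {g : R⟦X⟧} (hg : (X : R⟦X⟧) ^ n ∣ g) :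
    coeff n (f * g) = constantCoeff f * coeff n g := by
  obtain ⟨h, rfl⟩ := hg
  rw [mul_left_comm, coeff_X_pow_mul', coeff_X_pow_mul', if_pos le_rfl, if_pos le_rfl,
    Nat.sub_self, coeff_zero_eq_constantCoeff_apply, coeff_zero_eq_constantCoeff_apply, map_mul]

theorem constantCoeff_derivative (f : R⟦X⟧) : constantCoeff (d⁄dX R f) = coeff 1 f := by
  rw [← coeff_zero_eq_constantCoeff_apply, coeff_derivative, zero_add, Nat.cast_zero, zero_add,
    mul_one]

variable [NoZeroDivisors R]

theorem X_pow_succ_succ_dvd_of_dvd_mul_derivative {n : ℕ} {D P : R⟦X⟧}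
    (hD : (X : R⟦X⟧) ^ (n + 1) ∣ D) (hPD : (X : R⟦X⟧) ^ (n + 1) ∣ P * d⁄dX R D)
    (hP : ((n + 1 : ℕ) : R) * constantCoeff P ≠ 0) : (X : R⟦X⟧) ^ (n + 2) ∣ D := by
  have hcoeff : coeff n (P * d⁄dX R D) = 0 := X_pow_dvd_iff.mp hPD n n.lt_succ_self
  rw [coeff_mul_of_X_pow_dvd P (X_pow_dvd_derivative_s17 hD), coeff_derivative] at hcoeff
  have hD' : coeff (n + 1) D = 0 := by
    apply (mul_eq_zero.mp _).resolve_left hP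
    rw [← hcoeff]
    push_cast
    ring
  rw [X_pow_dvd_iff] at hD ⊢
  intro m hm
  rcases Nat.lt_succ_iff_lt_or_eq.mp hm with hm | rfl
  exacts [hD m hm, hD']

theorem X_pow_dvd_of_dvd_mul_derivative_sub {μ : ℕ} {D P Q : R⟦X⟧} (hD : (X : R⟦X⟧) ^ 2 ∣ D)
    (hPQ : (X : R⟦X⟧) ^ (μ - 1) ∣ P * d⁄dX R D - Q)
    (hQ : ∀ n, (X : R⟦X⟧) ^ n ∣ D → (X : R⟦X⟧) ^ n ∣ Q)
    (hP : ∀ n : ℕ, 2 ≤ n → n < μ → (n : R) * constantCoeff P ≠ 0) : (X : R⟦X⟧) ^ μ ∣ D := by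
  have key : ∀ k, k + 2 ≤ μ → (X : R⟦X⟧) ^ (k + 2) ∣ D := by
    intro k
    induction k with
    | zero => exact fun _ => hD
    | succ k ih =>
      intro hk
      have hDk := ih (by omega)
      have hPD : (X : R⟦X⟧) ^ (k + 2) ∣ P * d⁄dX R D := by
        have hPQk := (pow_dvd_pow X (by omega : k + 2 ≤ μ - 1)).trans hPQ
        simpa using dvd_add hPQk (hQ _ hDk)
      exact X_pow_succ_succ_dvd_of_dvd_mul_derivative hDk hPD (hP _ (by omega) (by omega))
  rcases le_or_gt μ 2 with hμ | hμ
  · exact (pow_dvd_pow X hμ).trans hD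
  · simpa [Nat.sub_add_cancel hμ.le] using key (μ - 2) (by omega)

end PowerSeries

theorem ode_uniqueness_general {K : Type*} [Field K] (μ : ℕ)
    (hchar : ringChar K = 0 ∨ μ ≤ ringChar K)
    (G : PowerSeries K) (H : Polynomial K) (α β : K)
    (hβ : β ≠ 0)
    (S₁ S₂ : PowerSeries K)
    (h₁0 : constantCoeff S₁ = α) (h₁1 : coeff 1 S₁ = β)
    (h₂0 : constantCoeff S₂ = α) (h₂1 : coeff 1 S₂ = β)
    (h₁ : (X : PowerSeries K) ^ (μ - 1) ∣ (derivative K S₁) ^ 2 - G * Polynomial.aeval S₁ H)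
    (h₂ : (X : PowerSeries K) ^ (μ - 1) ∣ (derivative K S₂) ^ 2 - G * Polynomial.aeval S₂ H) :
    (X : PowerSeries K) ^ μ ∣ S₁ - S₂ := by
  refine X_pow_dvd_of_dvd_mul_derivative_sub (P := derivative K S₁ + derivative K S₂)
    (Q := G * (Polynomial.aeval S₁ H - Polynomial.aeval S₂ H)) ?_ ?_ ?_ ?_
  · rw [X_pow_two_dvd_iff, map_sub, map_sub, h₁0, h₂0, h₁1, h₂1]
    exact ⟨sub_self α, sub_self β⟩
  · convert dvd_sub h₁ h₂ using 1
    rw [map_sub]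
    ring
  · exact fun n hn => dvd_mul_of_dvd_right (hn.trans (Polynomial.sub_dvd_aeval_sub S₁ S₂ H)) G
  · intro n hn hnμ
    rw [map_add, constantCoeff_derivative, constantCoeff_derivative, h₁1, h₂1, ← two_mul]
    exact mul_ne_zero (natCast_ne_zero_of_lt hchar (by omega) hnμ)
      (mul_ne_zero (mod_cast natCast_ne_zero_of_lt (m := 2) hchar two_pos (by omega)) hβ)

/-- Uniqueness of power series solutions of `S'² = G·(H∘S)` with the initial conditions
`S(0) = α`, `S'(0) = β` (where `β² = G(0) ≠ 0` and `H(α) = 1`), over a field of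
characteristic `0` or of characteristic `p ≥ μ`: any two solutions modulo `x^(μ-1)`
agree modulo `x^μ`. -/
theorem ode_uniqueness {K : Type*} [Field K] (μ : ℕ)
    (hchar : ringChar K = 0 ∨ μ ≤ ringChar K)
    (G : PowerSeries K) (H : Polynomial K) (α β : K)
    (hH : H.eval α = 1) (hG : constantCoeff G = β ^ 2) (hβ : β ≠ 0)
    (S₁ S₂ : PowerSeries K)
    (h₁0 : constantCoeff S₁ = α) (h₁1 : coeff 1 S₁ = β)
    (h₂0 : constantCoeff S₂ = α) (h₂1 : coeff 1 S₂ = β)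
    (h₁ : (X : PowerSeries K) ^ (μ - 1) ∣ (derivative K S₁) ^ 2 - G * Polynomial.aeval S₁ H)
    (h₂ : (X : PowerSeries K) ^ (μ - 1) ∣ (derivative K S₂) ^ 2 - G * Polynomial.aeval S₂ H) :
    (X : PowerSeries K) ^ μ ∣ S₁ - S₂ :=
  ode_uniqueness_general μ hchar G H α β hβ S₁ S₂ h₁0 h₁1 h₂0 h₂1 h₁ h₂
end
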